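/- Under conditions (S) and (E2), for ℓ ∈ {A,B}, the series Σ_{k=1}^n γ_k (η_{ℓ,k} − θ_ℓ) converges to a finite limit as n → ∞. -/

import Mathlib

/-!
Summation by parts writes `∑_{k ≤ n} γ_k x_k = ∑_{k ≤ n} (γ_k - γ_{k+1}) T_k + γ_{n+1} T_n`,
where `T_n = ∑_{i ≤ n} x_i` and `|T_n| ≤ R_n`. Condition (S) gives `exp (θ Γ_n) ≤ 1 + θ C n Γ_n`,
hence `Γ_n = O(log n)`. With `L_n = log (n + 2) ^ (1 + ε)`, (E2) gives
`R_n ≲ n / L_n ≤ ∑_{i ≤ n} 1 / L_i`, and a second summation by parts bounds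
`∑ (γ_k - γ_{k+1}) R_k` by `∑ γ_k / L_k ≲ ∑ γ_k / Γ_k ^ (1 + ε)`, which converges like
`∫ dΓ / Γ ^ (1 + ε)`. The boundary term is at most `γ_n R_n ≤ Γ_n R_n / n = O(R_n L_n / n) → 0`.
-/

open Finset Filter Real Topology

theorem exp_sub_exp_le_sub_mul_exp (a b : ℝ) : exp b - exp a ≤ (b - a) * exp b := by
  have h := mul_le_mul_of_nonneg_right (add_one_le_exp (a - b)) (exp_pos b).le
  rw [← exp_add, sub_add_cancel] at h
  linarith

theorem sub_div_rpow_one_add_le {a b ε : ℝ} (ha : 0 < a) (hab : a ≤ b) (hε : 0 < ε) :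
    (b - a) / b ^ (1 + ε) ≤ (a ^ (-ε) - b ^ (-ε)) / ε := by
  have hb : 0 < b := ha.trans_le hab
  have hlog : 1 - a / b ≤ log (b / a) := by
    simpa using one_sub_inv_le_log_of_pos (div_pos hb ha)
  have ha' : a ^ (-ε) = b ^ (-ε) * exp (ε * log (b / a)) := by
    rw [rpow_def_of_pos ha, rpow_def_of_pos hb, ← exp_add, log_div hb.ne' ha.ne']
    ring_nf
  have hb' : b ^ (1 + ε) = b * b ^ ε := by rw [rpow_add hb, rpow_one]
  have hbε : 0 < b ^ ε := rpow_pos_of_pos hb ε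
  calc (b - a) / b ^ (1 + ε) = ε * (1 - a / b) * b ^ (-ε) / ε := by
        rw [hb', rpow_neg hb.le]; field_simp
    _ ≤ ε * log (b / a) * b ^ (-ε) / ε := by gcongr
    _ ≤ (exp (ε * log (b / a)) - 1) * b ^ (-ε) / ε := by
        gcongr; linarith [add_one_le_exp (ε * log (b / a))]
    _ = (a ^ (-ε) - b ^ (-ε)) / ε := by rw [ha']; ring

theorem sum_Icc_one_eq_sum_range (g : ℕ → ℝ) (n : ℕ) :
    ∑ k ∈ Icc 1 n, g k = ∑ k ∈ range n, g (k + 1) := by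
  rw [← Ico_add_one_right_eq_Icc, sum_Ico_eq_sum_range]
  simp [add_comm]

theorem sum_Icc_by_parts (f x : ℕ → ℝ) (n : ℕ) :
    ∑ k ∈ Icc 1 n, f k * x k =
      ∑ k ∈ Icc 1 n, (f k - f (k + 1)) * ∑ i ∈ Icc 1 k, x i
        + f (n + 1) * ∑ i ∈ Icc 1 n, x i := by
  induction n with
  | zero => simp
  | succ n ih =>
    simp only [sum_Icc_succ_top (Nat.le_add_left 1 n), ih]
    ring

theorem nat_mul_le_sum_Icc {f : ℕ → ℝ} (hf : ∀ k, 1 ≤ k → f (k + 1) ≤ f k) (n : ℕ) :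
    n * f n ≤ ∑ k ∈ Icc 1 n, f k := by
  have hanti := antitoneOn_nat_Ici_of_succ_le hf
  have := card_nsmul_le_sum (Icc 1 n) f (f n) fun k hk =>
    hanti (mem_Icc.1 hk).1 ((mem_Icc.1 hk).1.trans (mem_Icc.1 hk).2) (mem_Icc.1 hk).2
  simpa using this

theorem div_le_sum_Icc_one_div {L : ℕ → ℝ} (hL : Monotone L) (hpos : ∀ n, 0 < L n) (n : ℕ) :
    n / L n ≤ ∑ i ∈ Icc 1 n, 1 / L i := by
  have := card_nsmul_le_sum (Icc 1 n) (fun i => 1 / L i) (1 / L n) fun i hi =>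
    one_div_le_one_div_of_le (hpos i) (hL (mem_Icc.1 hi).2)
  simpa [div_eq_mul_one_div (n : ℝ)] using this

theorem le_mul_sum_Icc_one_div {R L : ℕ → ℝ} {K : ℝ} (hL : Monotone L) (hpos : ∀ n, 0 < L n)
    (hK0 : 0 ≤ K) (hK : ∀ n : ℕ, R n * L n / n ≤ K) (n : ℕ) (hn : 1 ≤ n) :
    R n ≤ K * ∑ i ∈ Icc 1 n, 1 / L i := by
  have hn0 : (0 : ℝ) < n := by exact_mod_cast hn
  calc R n = R n * L n / n * (n / L n) := by field_simp [(hpos n).ne']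
    _ ≤ K * (n / L n) := by gcongr; exacts [div_nonneg hn0.le (hpos n).le, hK n]
    _ ≤ K * ∑ i ∈ Icc 1 n, 1 / L i := by gcongr; exact div_le_sum_Icc_one_div hL hpos n

theorem sum_Icc_sub_mul_sum_Icc_one_div_le_tsum {γ L : ℕ → ℝ} (hpos : ∀ n, 1 ≤ n → 0 < γ n)
    (hL : ∀ n, 0 < L n) (hsum : Summable fun k => γ (k + 1) / L (k + 1)) (n : ℕ) :
    ∑ k ∈ Icc 1 n, (γ k - γ (k + 1)) * ∑ i ∈ Icc 1 k, 1 / L i ≤ ∑' k, γ (k + 1) / L (k + 1) := by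
  have hparts := sum_Icc_by_parts γ (fun i => 1 / L i) n
  have hbdry : 0 ≤ γ (n + 1) * ∑ i ∈ Icc 1 n, 1 / L i :=
    mul_nonneg (hpos _ n.succ_pos).le (sum_nonneg fun i _ => (one_div_pos.2 (hL i)).le)
  calc ∑ k ∈ Icc 1 n, (γ k - γ (k + 1)) * ∑ i ∈ Icc 1 k, 1 / L i
      ≤ ∑ k ∈ Icc 1 n, γ k * (1 / L k) := by linarith
    _ = ∑ k ∈ range n, γ (k + 1) / L (k + 1) := by
        simp only [sum_Icc_one_eq_sum_range, mul_one_div]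
    _ ≤ ∑' k, γ (k + 1) / L (k + 1) :=
        hsum.sum_le_tsum _ fun k _ => div_nonneg (hpos _ k.succ_pos).le (hL _).le

theorem exists_tendsto_sum_Icc_mul_by_parts {f x b : ℕ → ℝ}
    (hf : ∀ k, 1 ≤ k → f (k + 1) ≤ f k)
    (hb : ∀ k, 1 ≤ k → |∑ i ∈ Icc 1 k, x i| ≤ b k)
    (hbdd : ∃ B, ∀ n, ∑ k ∈ Icc 1 n, (f k - f (k + 1)) * b k ≤ B)
    (hbdry : Tendsto (fun n => f (n + 1) * ∑ i ∈ Icc 1 n, x i) atTop (𝓝 0)) :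
    ∃ L, Tendsto (fun n => ∑ k ∈ Icc 1 n, f k * x k) atTop (𝓝 L) := by
  set g : ℕ → ℝ := fun k => (f k - f (k + 1)) * ∑ i ∈ Icc 1 k, x i
  obtain ⟨B, hB⟩ := hbdd
  have hgb : ∀ k, 1 ≤ k → |g k| ≤ (f k - f (k + 1)) * b k := fun k hk => by
    rw [abs_mul, abs_of_nonneg (sub_nonneg.2 (hf k hk))]
    exact mul_le_mul_of_nonneg_left (hb k hk) (sub_nonneg.2 (hf k hk))
  have hg : Summable fun k => g (k + 1) := by
    refine (summable_of_sum_range_le (c := B) (fun k => abs_nonneg (g (k + 1))) fun n => ?_).of_abs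
    rw [← sum_Icc_one_eq_sum_range (fun k => |g k|)]
    exact (sum_le_sum fun k hk => hgb k (mem_Icc.1 hk).1).trans (hB n)
  refine ⟨∑' k, g (k + 1), ?_⟩
  have hsum : Tendsto (fun n => ∑ k ∈ Icc 1 n, g k) atTop (𝓝 (∑' k, g (k + 1))) := by
    simpa only [sum_Icc_one_eq_sum_range g] using hg.hasSum.tendsto_sum_nat
  simpa only [sum_Icc_by_parts f x, add_zero] using hsum.add hbdry

theorem exp_mul_le_one_add_mul_of_sub_le {Γ : ℕ → ℝ} {θ C : ℝ} (hθ : 0 ≤ θ) (hC : 0 ≤ C)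
    (hΓ : Monotone Γ) (hΓ0 : Γ 0 = 0)
    (hstep : ∀ n, Γ (n + 1) - Γ n ≤ C * Γ (n + 1) * exp (-θ * Γ (n + 1))) (n : ℕ) :
    exp (θ * Γ n) ≤ 1 + θ * C * n * Γ n := by
  induction n with
  | zero => simp [hΓ0]
  | succ n ih =>
    have hincr : exp (θ * Γ (n + 1)) - exp (θ * Γ n) ≤ θ * C * Γ (n + 1) :=
      calc exp (θ * Γ (n + 1)) - exp (θ * Γ n)
          ≤ θ * (Γ (n + 1) - Γ n) * exp (θ * Γ (n + 1)) := by
            simpa only [mul_sub] using exp_sub_exp_le_sub_mul_exp (θ * Γ n) (θ * Γ (n + 1))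
        _ ≤ θ * (C * Γ (n + 1) * exp (-θ * Γ (n + 1))) * exp (θ * Γ (n + 1)) := by
            gcongr; exact hstep n
        _ = θ * C * Γ (n + 1) := by
            rw [mul_assoc, mul_assoc, ← exp_add, neg_mul, neg_add_cancel, exp_zero]; ring
    have hmono : θ * C * n * Γ n ≤ θ * C * n * Γ (n + 1) := by
      gcongr; exact hΓ n.le_succ
    push_cast
    linarith

theorem exists_le_mul_log_of_exp_le {x : ℕ → ℝ} {θ a : ℝ} (hθ : 0 < θ) (ha : 0 < a)
    (hx : ∀ n, 0 ≤ x n) (h : ∀ n, exp (θ * x n) ≤ 1 + a * n * x n) :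
    ∃ K, 0 < K ∧ ∀ n : ℕ, x n ≤ K * log (n + 2) := by
  -- `log z ≤ t z - 1 - log t` with `t = θ / (2 a)` absorbs `log (1 + a x)` into `θ x / 2 + c`
  set t := θ / (2 * a) with ht_def
  have ht : 0 < t := by positivity
  set c := t - 1 - log t with hc_def
  have hc : 0 ≤ c := by linarith [log_le_sub_one_of_pos ht]
  have hlog2 : 0 < log 2 := log_pos one_lt_two
  refine ⟨2 / θ * (1 + c / log 2), by positivity, fun n => ?_⟩
  have hn : (0 : ℝ) < n + 2 := by positivity
  have hax : 0 < 1 + a * x n := by linarith [mul_nonneg ha.le (hx n)]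
  have hsub : log (1 + a * x n) ≤ θ / 2 * x n + c := by
    have hz := log_le_sub_one_of_pos (mul_pos ht hax)
    rw [log_mul ht.ne' hax.ne'] at hz
    have ht' : t * (1 + a * x n) = t + θ / 2 * x n := by rw [ht_def]; field_simp
    linarith
  have hsplit : θ * x n ≤ log (n + 2) + log (1 + a * x n) := by
    rw [← log_mul hn.ne' hax.ne', le_log_iff_exp_le (mul_pos hn hax)]
    nlinarith [h n, hx n, mul_nonneg ha.le (hx n)]
  have hc' : c ≤ c / log 2 * log (n + 2) := by
    rw [div_mul_eq_mul_div, le_div_iff₀ hlog2]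
    exact mul_le_mul_of_nonneg_left (log_le_log two_pos (by linarith [n.cast_nonneg (α := ℝ)])) hc
  calc x n = 2 / θ * (θ / 2 * x n) := by field_simp
    _ ≤ 2 / θ * ((1 + c / log 2) * log (n + 2)) := by
        refine mul_le_mul_of_nonneg_left ?_ (by positivity); linarith
    _ = 2 / θ * (1 + c / log 2) * log (n + 2) := by ring

theorem summable_sub_div_rpow_one_add {Γ : ℕ → ℝ} {ε : ℝ} (hε : 0 < ε) (hΓ : Monotone Γ)
    (hΓ0 : 0 < Γ 0) : Summable fun k => (Γ (k + 1) - Γ k) / Γ (k + 1) ^ (1 + ε) := by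
  have hpos : ∀ k, 0 < Γ k := fun k => hΓ0.trans_le (hΓ k.zero_le)
  refine summable_of_sum_range_le (c := Γ 0 ^ (-ε) / ε)
    (fun k => div_nonneg (sub_nonneg.2 (hΓ k.le_succ)) (rpow_nonneg (hpos _).le _)) fun n => ?_
  calc ∑ k ∈ range n, (Γ (k + 1) - Γ k) / Γ (k + 1) ^ (1 + ε)
      ≤ ∑ k ∈ range n, (Γ k ^ (-ε) - Γ (k + 1) ^ (-ε)) / ε :=
        sum_le_sum fun k _ => sub_div_rpow_one_add_le (hpos k) (hΓ k.le_succ) hε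
    _ = (Γ 0 ^ (-ε) - Γ n ^ (-ε)) / ε := by rw [← sum_div, sum_range_sub']
    _ ≤ Γ 0 ^ (-ε) / ε := by gcongr; exact sub_le_self _ (rpow_nonneg (hpos n).le _)

theorem summable_sub_div_log_rpow {Γ : ℕ → ℝ} {K ε : ℝ} (hε : 0 < ε) (hΓ : Monotone Γ)
    (hΓ1 : 0 < Γ 1) (hK0 : 0 < K) (hK : ∀ n : ℕ, Γ n ≤ K * log (n + 2)) :
    Summable fun k : ℕ => (Γ (k + 1) - Γ k) / log ((k + 1 : ℕ) + 2) ^ (1 + ε) := by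
  have hs := summable_sub_div_rpow_one_add hε (fun a b h => hΓ (Nat.add_le_add_right h 1)) hΓ1
  rw [← summable_nat_add_iff 1]
  refine (hs.mul_left (K ^ (1 + ε))).of_nonneg_of_le (fun k => ?_) fun k => ?_
  · exact div_nonneg (sub_nonneg.2 (hΓ k.succ.le_succ))
      (rpow_nonneg (log_nonneg (by push_cast; linarith)) _)
  have hΓk : 0 < Γ (k + 2) := hΓ1.trans_le (hΓ (by omega))
  have hL : Γ (k + 2) ^ (1 + ε) ≤ K ^ (1 + ε) * log ((k + 2 : ℕ) + 2) ^ (1 + ε) := by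
    rw [← mul_rpow hK0.le (log_nonneg (by push_cast; linarith))]
    exact rpow_le_rpow hΓk.le (hK _) (by linarith)
  calc (Γ (k + 2) - Γ (k + 1)) / log ((k + 2 : ℕ) + 2) ^ (1 + ε)
      = K ^ (1 + ε) *
          ((Γ (k + 2) - Γ (k + 1)) / (K ^ (1 + ε) * log ((k + 2 : ℕ) + 2) ^ (1 + ε))) := by
        field_simp
    _ ≤ K ^ (1 + ε) * ((Γ (k + 2) - Γ (k + 1)) / Γ (k + 2) ^ (1 + ε)) := by
        gcongr
        exact sub_nonneg.2 (hΓ (k + 1).le_succ)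

theorem tendsto_mul_sum_Icc_of_log_rate {γ Γ x R : ℕ → ℝ} {K ε : ℝ}
    (hΓ : ∀ n, Γ n = ∑ k ∈ Icc 1 n, γ k) (hpos : ∀ n, 1 ≤ n → 0 < γ n)
    (hmono : ∀ n, 1 ≤ n → γ (n + 1) ≤ γ n) (hK0 : 0 ≤ K) (hK : ∀ n : ℕ, Γ n ≤ K * log (n + 2))
    (hε : 0 ≤ ε) (hT : ∀ n, |∑ i ∈ Icc 1 n, x i| ≤ R n)
    (hE2 : Tendsto (fun n : ℕ => R n * log (n + 2) ^ (1 + ε) / n) atTop (𝓝 0)) :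
    Tendsto (fun n => γ (n + 1) * ∑ i ∈ Icc 1 n, x i) atTop (𝓝 0) := by
  refine (Asymptotics.IsBigO.of_bound K (eventually_atTop.2 ⟨1, fun n hn => ?_⟩)).trans_tendsto hE2
  have hn0 : (0 : ℝ) < n := by exact_mod_cast hn
  have hR : 0 ≤ R n := (abs_nonneg _).trans (hT n)
  have hlog : 1 ≤ log (n + 2) := by
    rw [le_log_iff_exp_le (by positivity)]
    linarith [exp_one_lt_d9, (Nat.one_le_cast (α := ℝ)).2 hn]
  have hγ : n * γ n ≤ K * log (n + 2) ^ (1 + ε) :=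
    calc n * γ n ≤ Γ n := hΓ n ▸ nat_mul_le_sum_Icc hmono n
      _ ≤ K * log (n + 2) := hK n
      _ ≤ K * log (n + 2) ^ (1 + ε) := by gcongr; exact self_le_rpow_of_one_le hlog (by linarith)
  rw [Real.norm_eq_abs, Real.norm_eq_abs, abs_mul, abs_of_pos (hpos _ (by omega)),
    abs_of_nonneg (div_nonneg (mul_nonneg hR (by positivity)) hn0.le)]
  calc γ (n + 1) * |∑ i ∈ Icc 1 n, x i| ≤ γ n * R n :=
        mul_le_mul (hmono n hn) (hT n) (abs_nonneg _) (hpos n hn).le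
    _ = n * γ n * R n / n := by field_simp
    _ ≤ K * log (n + 2) ^ (1 + ε) * R n / n := by gcongr
    _ = K * (R n * log (n + 2) ^ (1 + ε) / n) := by ring

theorem exists_tendsto_sum_mul_of_log_rate {γ Γ x R : ℕ → ℝ} {θ ε C : ℝ}
    (hΓ : ∀ n, Γ n = ∑ k ∈ Icc 1 n, γ k) (hpos : ∀ n, 1 ≤ n → 0 < γ n)
    (hmono : ∀ n, 1 ≤ n → γ (n + 1) ≤ γ n)
    (hθ : 0 < θ) (hC : 0 < C) (hO : ∀ n, 1 ≤ n → γ n ≤ C * Γ n * exp (-θ * Γ n))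
    (hε : 0 < ε) (hT : ∀ n, |∑ i ∈ Icc 1 n, x i| ≤ R n)
    (hE2 : Tendsto (fun n : ℕ => R n * log (n + 2) ^ (1 + ε) / n) atTop (𝓝 0)) :
    ∃ L, Tendsto (fun n => ∑ k ∈ Icc 1 n, γ k * x k) atTop (𝓝 L) := by
  have hΓsucc : ∀ n, Γ (n + 1) = Γ n + γ (n + 1) := fun n => by
    rw [hΓ, hΓ, sum_Icc_succ_top (Nat.le_add_left 1 n)]
  have hΓmono : Monotone Γ := monotone_nat_of_le_succ fun n => by
    rw [hΓsucc]; linarith [hpos (n + 1) n.succ_pos]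
  have hΓ0 : Γ 0 = 0 := by simp [hΓ]
  obtain ⟨K, hK0, hK⟩ := exists_le_mul_log_of_exp_le hθ (mul_pos hθ hC)
    (fun n => hΓ0 ▸ hΓmono n.zero_le)
    (exp_mul_le_one_add_mul_of_sub_le hθ.le hC.le hΓmono hΓ0 fun n => by
      simpa [hΓsucc] using hO (n + 1) n.succ_pos)
  have hsum : Summable fun k : ℕ => γ (k + 1) / log ((k + 1 : ℕ) + 2) ^ (1 + ε) := by
    have hΓ1 : 0 < Γ 1 := by simpa [hΓ] using hpos 1 le_rfl
    simpa only [hΓsucc, add_sub_cancel_left] using summable_sub_div_log_rpow hε hΓmono hΓ1 hK0 hK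
  set L : ℕ → ℝ := fun n => log (n + 2) ^ (1 + ε)
  have hLpos : ∀ n, 0 < L n := fun n =>
    rpow_pos_of_pos (log_pos (by linarith [n.cast_nonneg (α := ℝ)])) _
  have hLmono : Monotone L := monotone_nat_of_le_succ fun n => by
    simp only [L]; gcongr
    · exact log_nonneg (by linarith [n.cast_nonneg (α := ℝ)])
    · linarith
  obtain ⟨K', hK'⟩ := hE2.bddAbove_range
  replace hK' : ∀ n : ℕ, R n * L n / n ≤ K' := fun n => hK' ⟨n, rfl⟩
  -- at `n = 0` the quotient is the junk value `_ / 0 = 0`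
  have hK'0 : 0 ≤ K' := by simpa using hK' 0
  refine exists_tendsto_sum_Icc_mul_by_parts (b := fun n => K' * ∑ i ∈ Icc 1 n, 1 / L i) hmono
    (fun k hk => (hT k).trans (le_mul_sum_Icc_one_div hLmono hLpos hK'0 hK' k hk))
    ⟨K' * ∑' k, γ (k + 1) / L (k + 1), fun n => ?_⟩
    (tendsto_mul_sum_Icc_of_log_rate hΓ hpos hmono hK0.le hK hε.le hT hE2)
  simp only [mul_left_comm _ K', ← mul_sum]
  exact mul_le_mul_of_nonneg_left (sum_Icc_sub_mul_sum_Icc_one_div_le_tsum hpos hLpos hsum n) hK'0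

theorem stmt_13_general (γ Γ : ℕ → ℝ) (ηA ηB : ℕ → ℝ) (θA θB : ℝ) (R : ℕ → ℝ) (ε C : ℝ)
    (hΓ : ∀ n, Γ n = ∑ k ∈ Finset.Icc 1 n, γ k)
    (hpos : ∀ n, 1 ≤ n → 0 < γ n)
    (hmono : ∀ n, 1 ≤ n → γ (n + 1) ≤ γ n)
    (hC : 0 < C) (hO : ∀ n, 1 ≤ n → γ n ≤ C * Γ n * Real.exp (-θB * Γ n))
    (hθB : θB ∈ Set.Ioo (0:ℝ) 1)
    (hR : ∀ n, R n = max |∑ i ∈ Finset.Icc 1 n, (ηA i - θA)|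
                         |∑ i ∈ Finset.Icc 1 n, (ηB i - θB)|)
    (hε : 0 < ε)
    (hE2 : Tendsto (fun n : ℕ => R n * (Real.log (n + 2)) ^ (1 + ε) / n) atTop (nhds 0)) :
    (∃ LA : ℝ, Tendsto (fun n => ∑ k ∈ Finset.Icc 1 n, γ k * (ηA k - θA)) atTop (nhds LA)) ∧
    (∃ LB : ℝ, Tendsto (fun n => ∑ k ∈ Finset.Icc 1 n, γ k * (ηB k - θB)) atTop (nhds LB)) :=
  ⟨exists_tendsto_sum_mul_of_log_rate hΓ hpos hmono hθB.1 hC hO hε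
      (fun n => (hR n).symm ▸ le_max_left _ _) hE2,
    exists_tendsto_sum_mul_of_log_rate hΓ hpos hmono hθB.1 hC hO hε
      (fun n => (hR n).symm ▸ le_max_right _ _) hE2⟩

theorem stmt_13 (γ Γ : ℕ → ℝ) (ηA ηB : ℕ → ℝ) (θA θB : ℝ) (R : ℕ → ℝ) (ε C : ℝ)
    (hΓ : ∀ n, Γ n = ∑ k ∈ Finset.Icc 1 n, γ k)
    (hpos : ∀ n, 1 ≤ n → 0 < γ n) (hlt : ∀ n, 1 ≤ n → γ n < 1)
    (hmono : ∀ n, 1 ≤ n → γ (n + 1) ≤ γ n)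
    (htend : Tendsto Γ atTop atTop)
    (hC : 0 < C) (hO : ∀ n, 1 ≤ n → γ n ≤ C * Γ n * Real.exp (-θB * Γ n))
    (hηA : ∀ k, ηA k = 0 ∨ ηA k = 1) (hηB : ∀ k, ηB k = 0 ∨ ηB k = 1)
    (hθA : θA ∈ Set.Ioo (0:ℝ) 1) (hθB : θB ∈ Set.Ioo (0:ℝ) 1)
    (hR : ∀ n, R n = max |∑ i ∈ Finset.Icc 1 n, (ηA i - θA)|
                         |∑ i ∈ Finset.Icc 1 n, (ηB i - θB)|)
    (hε : 0 < ε)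
    (hE2 : Tendsto (fun n : ℕ => R n * (Real.log (n + 2)) ^ (1 + ε) / n) atTop (nhds 0)) :
    (∃ LA : ℝ, Tendsto (fun n => ∑ k ∈ Finset.Icc 1 n, γ k * (ηA k - θA)) atTop (nhds LA)) ∧
    (∃ LB : ℝ, Tendsto (fun n => ∑ k ∈ Finset.Icc 1 n, γ k * (ηB k - θB)) atTop (nhds LB)) :=
  stmt_13_general γ Γ ηA ηB θA θB R ε C hΓ hpos hmono hC hO hθB hR hε hE2
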